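/- In the randomized classifier model with BR_1 > BR_2, any classifier achieving zero disparity must have utility at most 1 - min(n_1/n_+, λ·n_2/n_-)·(BR_1 - BR_2); that is, the utility-optimal zero-disparity classifier attains exactly this bound. -/

import Mathlib

/-!
Zero disparity means equal selection rates. Now `SR₁ ≥ BR₁ - x`, where `x = (1 - p₀) n₁₁ / n₁` is the
share of group 1 lost to false negatives, and `SR₂ ≤ BR₂ + y`, where `y = p₃ n₂₀ / n₂` is the share of
group 2 gained by false positives, so the base-rate gap `δ = BR₁ - BR₂` satisfies `δ ≤ x + y`. Each
unit of `x` costs `n₁ / n₊` of true-positive rate and each unit of `y` costs `λ n₂ / n₋` of weighted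
false-positive rate, so the utility is at most `1 - min (n₁ / n₊) (λ n₂ / n₋) · δ`. Spending the whole
gap on the cheaper side attains the bound: accept group-1 positives at rate `BR₂ / BR₁`, or accept a
fraction `δ n₂ / n₂₀` of group-2 negatives, accepting every other positive and no other negative.
-/

noncomputable def disp (n11 n10 n21 n20 : ℝ) (p : Fin 4 → ℝ) : ℝ :=
  (p 0 * n11 + p 1 * n10) / (n11 + n10) - (p 2 * n21 + p 3 * n20) / (n21 + n20)

noncomputable def util (n11 n10 n21 n20 lam : ℝ) (p : Fin 4 → ℝ) : ℝ :=
  (p 0 * n11 + p 2 * n21) / (n11 + n21) - lam * ((p 1 * n10 + p 3 * n20) / (n10 + n20))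

theorem min_mul_le_mul_add_mul {α : Type*} [Ring α] [LinearOrder α] [IsOrderedRing α]
    {a b d x y : α} (hmin : 0 ≤ min a b) (hx : 0 ≤ x) (hy : 0 ≤ y) (hd : d ≤ x + y) :
    min a b * d ≤ a * x + b * y :=
  calc min a b * d ≤ min a b * (x + y) := mul_le_mul_of_nonneg_left hd hmin
    _ = min a b * x + min a b * y := mul_add _ _ _
    _ ≤ a * x + b * y := add_le_add (mul_le_mul_of_nonneg_right (min_le_left a b) hx)
        (mul_le_mul_of_nonneg_right (min_le_right a b) hy)

theorem vec_four_mem_Icc {α : Type*} [Preorder α] [Zero α] [One α] {a b c d : α}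
    (ha : a ∈ Set.Icc 0 1) (hb : b ∈ Set.Icc 0 1) (hc : c ∈ Set.Icc 0 1)
    (hd : d ∈ Set.Icc 0 1) : ![a, b, c, d] ∈ Set.Icc 0 1 := by
  constructor <;> intro i <;> fin_cases i <;> simp_all

section

variable {n11 n10 n21 n20 lam : ℝ}

theorem base_rate_gap_le_of_disp_eq_zero (h11 : 0 ≤ n11) (h10 : 0 ≤ n10) (h21 : 0 ≤ n21)
    (h20 : 0 ≤ n20) {p : Fin 4 → ℝ} (hp : p ∈ Set.Icc 0 1) (hdisp : disp n11 n10 n21 n20 p = 0) :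
    n11 / (n11 + n10) - n21 / (n21 + n20) ≤
      (1 - p 0) * n11 / (n11 + n10) + p 3 * n20 / (n21 + n20) := by
  obtain ⟨hp0, hp1⟩ := hp
  have hSR : (p 0 * n11 + p 1 * n10) / (n11 + n10) = (p 2 * n21 + p 3 * n20) / (n21 + n20) :=
    sub_eq_zero.mp hdisp
  have hSR₁ : p 0 * n11 / (n11 + n10) ≤ (p 0 * n11 + p 1 * n10) / (n11 + n10) := by
    gcongr
    exact le_add_of_nonneg_right (mul_nonneg (hp0 1) h10)
  have hSR₂ : (p 2 * n21 + p 3 * n20) / (n21 + n20) ≤ (n21 + p 3 * n20) / (n21 + n20) := by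
    gcongr
    exact mul_le_of_le_one_left h21 (hp1 2)
  rw [sub_mul, sub_div, one_mul]
  rw [add_div n21] at hSR₂
  linarith

theorem util_le_one_sub_missed_sub_false_pos (h11 : 0 < n11) (h10 : 0 ≤ n10) (h21 : 0 ≤ n21)
    (h20 : 0 ≤ n20) (hlam : 0 ≤ lam) {p : Fin 4 → ℝ} (hp : p ∈ Set.Icc 0 1) :
    util n11 n10 n21 n20 lam p ≤
      1 - (1 - p 0) * n11 / (n11 + n21) - lam * (p 3 * n20 / (n10 + n20)) := by
  obtain ⟨hp0, hp1⟩ := hp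
  have hTPR : (p 0 * n11 + p 2 * n21) / (n11 + n21) ≤ 1 - (1 - p 0) * n11 / (n11 + n21) := by
    rw [le_sub_iff_add_le, ← add_div, div_le_one (by positivity)]
    linarith [mul_le_of_le_one_left h21 (hp1 2)]
  have hFPR : p 3 * n20 / (n10 + n20) ≤ (p 1 * n10 + p 3 * n20) / (n10 + n20) := by
    gcongr
    exact le_add_of_nonneg_left (mul_nonneg (hp0 1) h10)
  have := mul_le_mul_of_nonneg_left hFPR hlam
  unfold util
  linarith

theorem util_le_of_disp_eq_zero (h11 : 0 < n11) (h10 : 0 < n10) (h21 : 0 < n21) (h20 : 0 < n20)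
    (hlam : 0 ≤ lam) {p : Fin 4 → ℝ} (hp : p ∈ Set.Icc 0 1) (hdisp : disp n11 n10 n21 n20 p = 0) :
    util n11 n10 n21 n20 lam p ≤
      1 - min ((n11 + n10) / (n11 + n21)) (lam * (n21 + n20) / (n10 + n20)) *
        (n11 / (n11 + n10) - n21 / (n21 + n20)) := by
  have hgap := base_rate_gap_le_of_disp_eq_zero h11.le h10.le h21.le h20.le hp hdisp
  have hutil := util_le_one_sub_missed_sub_false_pos h11 h10.le h21.le h20.le hlam hp
  have hmissed : 0 ≤ (1 - p 0) * n11 / (n11 + n10) :=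
    div_nonneg (mul_nonneg (sub_nonneg.2 (hp.2 0)) h11.le) (by positivity)
  have hfalse : 0 ≤ p 3 * n20 / (n21 + n20) :=
    div_nonneg (mul_nonneg (hp.1 3) h20.le) (by positivity)
  have hmix := min_mul_le_mul_add_mul (a := (n11 + n10) / (n11 + n21))
    (b := lam * (n21 + n20) / (n10 + n20)) (by positivity) hmissed hfalse hgap
  have hA : (n11 + n10) / (n11 + n21) * ((1 - p 0) * n11 / (n11 + n10)) =
      (1 - p 0) * n11 / (n11 + n21) := by
    field_simp
  have hB : lam * (n21 + n20) / (n10 + n20) * (p 3 * n20 / (n21 + n20)) =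
      lam * (p 3 * n20 / (n10 + n20)) := by
    field_simp
  linarith

theorem exists_disp_eq_zero_lowering_tpr₁ (h11 : 0 < n11) (h10 : 0 ≤ n10) (h21 : 0 ≤ n21)
    (h20 : 0 ≤ n20) (hBR : n21 / (n21 + n20) ≤ n11 / (n11 + n10)) :
    ∃ p ∈ Set.Icc (0 : Fin 4 → ℝ) 1, disp n11 n10 n21 n20 p = 0 ∧
      util n11 n10 n21 n20 lam p =
        1 - (n11 + n10) / (n11 + n21) * (n11 / (n11 + n10) - n21 / (n21 + n20)) := by
  have hp₀ : n21 / (n21 + n20) / (n11 / (n11 + n10)) ∈ Set.Icc 0 1 :=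
    ⟨by positivity, div_le_one_of_le₀ hBR (by positivity)⟩
  refine ⟨_, vec_four_mem_Icc hp₀ (Set.left_mem_Icc.2 zero_le_one)
    (Set.right_mem_Icc.2 zero_le_one) (Set.left_mem_Icc.2 zero_le_one), ?_, ?_⟩
  · simp only [disp, Matrix.cons_val_zero, Matrix.cons_val_one, Matrix.cons_val, zero_mul, one_mul,
      add_zero]
    field_simp
    ring
  · simp only [util, Matrix.cons_val_zero, Matrix.cons_val_one, Matrix.cons_val, zero_mul, one_mul,
      add_zero, zero_div, mul_zero, sub_zero]
    field_simp
    ring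

theorem exists_disp_eq_zero_raising_fpr₂ (h11 : 0 < n11) (h10 : 0 ≤ n10) (h21 : 0 ≤ n21)
    (h20 : 0 < n20) (hBR : n21 / (n21 + n20) ≤ n11 / (n11 + n10)) :
    ∃ p ∈ Set.Icc (0 : Fin 4 → ℝ) 1, disp n11 n10 n21 n20 p = 0 ∧
      util n11 n10 n21 n20 lam p =
        1 - lam * (n21 + n20) / (n10 + n20) * (n11 / (n11 + n10) - n21 / (n21 + n20)) := by
  have hBR₁ : n11 / (n11 + n10) ≤ 1 := div_le_one_of_le₀ (by linarith) (by positivity)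
  have hp₃ : (n11 / (n11 + n10) - n21 / (n21 + n20)) * (n21 + n20) / n20 ∈ Set.Icc 0 1 := by
    refine ⟨div_nonneg (mul_nonneg (sub_nonneg.2 hBR) (by positivity)) h20.le, ?_⟩
    rw [div_le_one h20, sub_mul, div_mul_cancel₀ _ (by positivity)]
    linarith [mul_le_mul_of_nonneg_right hBR₁ (by positivity : 0 ≤ n21 + n20)]
  refine ⟨_, vec_four_mem_Icc (Set.right_mem_Icc.2 zero_le_one)
    (Set.left_mem_Icc.2 zero_le_one) (Set.right_mem_Icc.2 zero_le_one) hp₃, ?_, ?_⟩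
  · simp only [disp, Matrix.cons_val_zero, Matrix.cons_val_one, Matrix.cons_val, zero_mul, one_mul,
      add_zero]
    field_simp
    ring
  · simp only [util, Matrix.cons_val_zero, Matrix.cons_val_one, Matrix.cons_val, zero_mul, one_mul,
      zero_add]
    field_simp

end

/-- with `BR₁ > BR₂`, every zero-disparity randomized classifier has
utility at most `1 - min(n₁/n₊, λ·n₂/n₋)·(BR₁ - BR₂)`, and this bound is attained
by some zero-disparity classifier. -/
theorem zero_disparity_utility_bound_attained
    (n11 n10 n21 n20 lam : ℝ)
    (h11 : 0 < n11) (h10 : 0 < n10) (h21 : 0 < n21) (h20 : 0 < n20) (hlam : 0 < lam)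
    (hBR : n21 / (n21 + n20) < n11 / (n11 + n10)) :
    (∀ p ∈ Set.Icc (0 : Fin 4 → ℝ) 1, disp n11 n10 n21 n20 p = 0 →
        util n11 n10 n21 n20 lam p ≤
          1 - min ((n11 + n10) / (n11 + n21)) (lam * (n21 + n20) / (n10 + n20)) *
            (n11 / (n11 + n10) - n21 / (n21 + n20))) ∧
    (∃ p ∈ Set.Icc (0 : Fin 4 → ℝ) 1, disp n11 n10 n21 n20 p = 0 ∧
        util n11 n10 n21 n20 lam p =
          1 - min ((n11 + n10) / (n11 + n21)) (lam * (n21 + n20) / (n10 + n20)) *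
            (n11 / (n11 + n10) - n21 / (n21 + n20))) := by
  refine ⟨fun p hp hdisp => util_le_of_disp_eq_zero h11 h10 h21 h20 hlam.le hp hdisp, ?_⟩
  rcases le_total ((n11 + n10) / (n11 + n21)) (lam * (n21 + n20) / (n10 + n20)) with hle | hle
  · rw [min_eq_left hle]
    exact exists_disp_eq_zero_lowering_tpr₁ h11 h10.le h21.le h20.le hBR.le
  · rw [min_eq_right hle]
    exact exists_disp_eq_zero_raising_fpr₂ h11 h10.le h21.le h20 hBR.le
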